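/- arXiv:1810.06382 — 3 statements merged into one kernel-verified Lean document; each statement's English description precedes it below -/
import Mathlib

section
/- Let Ω be a measurable space, let I be a countable set, let A = (A_i)_{i∈I} be an Ω^I-valued random variable with law P, and let (K_n)_{n≥0} be an increasing sequence of finite subsets of I with ⋃_{n≥0} K_n = I. If A is tail-trivial, then for every measurable set 𝒜 ⊆ Ω^I with P(A ∈ 𝒜) > 0, the quantity sup{ |P(A ∈ 𝒜 and A ∈ ℬ) − P(A ∈ 𝒜)·P(A ∈ ℬ)| : ℬ a measurable set belonging to ℱ_{I∖K_n} } converges to 0 as n → ∞. -/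
/-!
Let `μ` be the law of `A` and `ℱₙ = ℱ_{I∖Kₙ}`. In `L²(μ)` the subspaces of `ℱₙ`-measurable
functions decrease, so the orthogonal projections onto them (the conditional expectations)
converge strongly to the projection onto their intersection. A function in the intersection has
a version measurable for `⨅ ℱₙ ≤ 𝒯`, so by tail triviality it is a.e. constant: the intersection
is the line of constants, and the limit of the projections of `1_𝒜` is `μ 𝒜`. For `ℬ ∈ ℱₙ`,
`μ (𝒜 ∩ ℬ) - μ 𝒜 * μ ℬ = ⟪1_ℬ, E[1_𝒜 | ℱₙ] - μ 𝒜⟫`, which Cauchy–Schwarz bounds by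
`‖E[1_𝒜 | ℱₙ] - μ 𝒜‖₂ → 0`, uniformly in `ℬ`.
-/

open MeasureTheory Filter

/-- The sub-σ-algebra of the product σ-algebra on `I → Ω` consisting of events depending
only on the coordinates in `J`. -/
def cylAlg (Ω : Type*) [m : MeasurableSpace Ω] {I : Type*} (J : Set I) :
    MeasurableSpace (I → Ω) :=
  ⨆ i ∈ J, MeasurableSpace.comap (fun f => f i) m

/-- The tail σ-algebra of `I → Ω`: the intersection of the σ-algebras `cylAlg Ω J`
over all `J ⊆ I` with finite complement. -/
def tailAlg (Ω : Type*) [MeasurableSpace Ω] (I : Type*) : MeasurableSpace (I → Ω) :=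
  ⨅ (J : Set I) (_ : Jᶜ.Finite), cylAlg Ω J

open Topology ProbabilityTheory

namespace Submodule

variable {𝕜 E : Type*} [RCLike 𝕜] [NormedAddCommGroup E] [InnerProductSpace 𝕜 E]

theorem starProjection_tendsto_iInf [CompleteSpace E] (U : ℕ → Submodule 𝕜 E)
    [∀ n, (U n).HasOrthogonalProjection] [(⨅ n, U n).HasOrthogonalProjection]
    (hU : Antitone U) (x : E) :
    Tendsto (fun n => (U n).starProjection x) atTop (𝓝 ((⨅ n, U n).starProjection x)) := by
  -- Reduce to the increasing family of orthogonal complements.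
  have hclosure : (⨆ n, (U n)ᗮ).topologicalClosure = (⨅ n, U n)ᗮ := by
    rw [← orthogonal_orthogonal_eq_closure, ← iInf_orthogonal]
    simp only [orthogonal_orthogonal]
  have : (⨆ n, (U n)ᗮ).topologicalClosure.HasOrthogonalProjection := by
    rw [hclosure]; infer_instance
  have hcompl := (starProjection_tendsto_closure_iSup (fun n => (U n)ᗮ)
    (fun _ _ h => orthogonal_le (hU h)) x).const_sub x
  simp_rw [hclosure] at hcompl
  simpa [starProjection_orthogonal] using hcompl

theorem norm_inner_sub_inner_starProjection_le {K U : Submodule 𝕜 E}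
    [K.HasOrthogonalProjection] [U.HasOrthogonalProjection] {y : E} (hy : y ∈ U) (x : E) :
    ‖inner 𝕜 y x - inner 𝕜 y (K.starProjection x)‖ ≤
      ‖y‖ * ‖U.starProjection x - K.starProjection x‖ := by
  conv_lhs => rw [← starProjection_eq_self_iff.mpr hy, inner_starProjection_left_eq_right,
    starProjection_eq_self_iff.mpr hy, ← inner_sub_right]
  exact norm_inner_le_norm _ _

end Submodule

section

variable {α : Type*} {m m' m0 : MeasurableSpace α} {μ : Measure α}

theorem indep_of_measure_zero_or_one [IsProbabilityMeasure μ]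
    (hm : m ≤ m0) (htriv : ∀ s, MeasurableSet[m] s → μ s = 0 ∨ μ s = 1) : Indep m m' μ := by
  refine (Indep_iff _ _ _).2 fun s t hs _ => ?_
  rcases htriv s hs with h0 | h1
  · rw [h0, zero_mul]
    exact measure_mono_null Set.inter_subset_left h0
  · have hcompl : μ sᶜ = 0 := by rw [prob_compl_eq_one_sub (hm s hs), h1, tsub_self]
    rw [h1, one_mul, Set.inter_comm, ← measure_inter_add_sdiff t (hm s hs),
      measure_mono_null (Set.sdiff_subset_compl t s) hcompl, add_zero]

theorem ae_eq_integral_of_measure_zero_or_one {E : Type*} [NormedAddCommGroup E]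
    [NormedSpace ℝ E] [CompleteSpace E] [IsProbabilityMeasure μ]
    (hm : m ≤ m0) (htriv : ∀ s, MeasurableSet[m] s → μ s = 0 ∨ μ s = 1)
    {f : α → E} (hf : AEStronglyMeasurable[m] f μ) (hfi : Integrable f μ) :
    f =ᵐ[μ] fun _ => μ[f] := by
  have hindep : Indep m0 m μ := (indep_of_measure_zero_or_one hm htriv).symm
  have hmk := hfi.1.ae_eq_mk
  calc f =ᵐ[μ] μ[f | m] := (condExp_of_aestronglyMeasurable' hm hf hfi).symm
    _ =ᵐ[μ] μ[hfi.1.mk f | m] := condExp_congr_ae hmk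
    _ =ᵐ[μ] fun _ => μ[hfi.1.mk f] := condExp_indep_eq le_rfl hm hfi.1.stronglyMeasurable_mk hindep
    _ = fun _ => μ[f] := by rw [integral_congr_ae hmk.symm]

theorem aestronglyMeasurable_iInf_of_antitone {ℱ : ℕ → MeasurableSpace α} (hℱ : Antitone ℱ)
    {f : α → ℝ} (hf : ∀ n, AEStronglyMeasurable[ℱ n] f μ) :
    AEStronglyMeasurable[⨅ n, ℱ n] f μ := by
  set g : ℕ → α → ℝ := fun n => (hf n).mk f
  -- The limsup of the versions depends only on their tail, so it is `ℱ N`-measurable for all `N`.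
  refine ⟨fun x => limsup (fun n => g n x) atTop, ?_, ?_⟩
  · refine Measurable.stronglyMeasurable ?_
    intro t ht
    refine MeasurableSpace.measurableSet_iInf.2 fun N => ?_
    have hshift : (fun x => limsup (fun n => g n x) atTop) =
        fun x => limsup (fun n => g (n + N) x) atTop :=
      funext fun x => (limsup_nat_add (fun n => g n x) N).symm
    rw [hshift]
    refine Measurable.limsup (fun n => ?_) ht
    exact ((hf (n + N)).stronglyMeasurable_mk.mono (hℱ (Nat.le_add_left N n))).measurable
  · filter_upwards [ae_all_iff.2 fun n => (hf n).ae_eq_mk] with x hx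
    simp [g, ← hx]

theorem lpMeas_mono {F 𝕜 : Type*} [RCLike 𝕜] [NormedAddCommGroup F] [NormedSpace 𝕜 F]
    {p : ENNReal} (hm : m ≤ m') :
    lpMeas F 𝕜 m p μ ≤ lpMeas F 𝕜 m' p μ :=
  fun _ hf => AEStronglyMeasurable.mono hm hf

theorem iInf_lpMeas_eq_span_one [IsProbabilityMeasure μ] {ℱ : ℕ → MeasurableSpace α}
    (hle : ∀ n, ℱ n ≤ m0) (hℱ : Antitone ℱ)
    (htriv : ∀ s, MeasurableSet[⨅ n, ℱ n] s → μ s = 0 ∨ μ s = 1) :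
    ⨅ n, lpMeas ℝ ℝ (ℱ n) 2 μ = ℝ ∙ Lp.const 2 μ (1 : ℝ) := by
  refine le_antisymm (fun f hf => ?_) ?_
  · have hmeas : ∀ n, AEStronglyMeasurable[ℱ n] f μ := fun n =>
      mem_lpMeas_iff_aestronglyMeasurable.1 (Submodule.mem_iInf _ |>.1 hf n)
    have hconst := ae_eq_integral_of_measure_zero_or_one (iInf_le_of_le 0 (hle 0)) htriv
      (aestronglyMeasurable_iInf_of_antitone hℱ hmeas) ((Lp.memLp f).integrable one_le_two)
    refine Submodule.mem_span_singleton.2 ⟨μ[f], Lp.ext ?_⟩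
    filter_upwards [Lp.coeFn_smul (μ[f]) (Lp.const 2 μ (1 : ℝ)), hconst] with x h1 h2
    simp [h1, h2]
  · rw [Submodule.span_singleton_le_iff_mem, Submodule.mem_iInf, ← indicatorConstLp_univ]
    exact fun n => mem_lpMeas_indicatorConstLp (hle n) MeasurableSet.univ _

theorem starProjection_span_const_one [IsProbabilityMeasure μ] (f : Lp ℝ 2 μ) :
    (ℝ ∙ Lp.const 2 μ (1 : ℝ)).starProjection f = (∫ x, f x ∂μ) • Lp.const 2 μ (1 : ℝ) := by
  rw [Submodule.starProjection_singleton, ← indicatorConstLp_univ,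
    L2.inner_indicatorConstLp_one, norm_indicatorConstLp two_ne_zero ENNReal.ofNat_ne_top]
  simp

theorem abs_measureReal_inter_sub_mul_le [IsProbabilityMeasure μ]
    (hm : m ≤ m0) [(lpMeas ℝ ℝ m 2 μ).HasOrthogonalProjection] {s t : Set α}
    (hs : MeasurableSet s) (ht : MeasurableSet[m] t) :
    |μ.real (s ∩ t) - μ.real s * μ.real t| ≤
      ‖(lpMeas ℝ ℝ m 2 μ).starProjection (indicatorConstLp 2 hs (measure_ne_top μ s) (1 : ℝ)) -
        (ℝ ∙ Lp.const 2 μ (1 : ℝ)).starProjection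
          (indicatorConstLp 2 hs (measure_ne_top μ s) (1 : ℝ))‖ := by
  set y := indicatorConstLp 2 (hm t ht) (measure_ne_top μ t) (1 : ℝ)
  set x := indicatorConstLp 2 hs (measure_ne_top μ s) (1 : ℝ)
  have hy : ‖y‖ ≤ 1 := by
    rw [norm_indicatorConstLp two_ne_zero ENNReal.ofNat_ne_top, norm_one, one_mul]
    exact Real.rpow_le_one measureReal_nonneg measureReal_le_one (by norm_num)
  have hinter : inner ℝ y x = μ.real (s ∩ t) := by
    rw [L2.real_inner_indicatorConstLp_one_indicatorConstLp_one, Set.inter_comm]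
  have hprod : inner ℝ y ((ℝ ∙ Lp.const 2 μ (1 : ℝ)).starProjection x) = μ.real s * μ.real t := by
    rw [starProjection_span_const_one, inner_smul_right, integral_indicatorConstLp,
      ← indicatorConstLp_univ, L2.real_inner_indicatorConstLp_one_indicatorConstLp_one,
      Set.inter_univ, smul_eq_mul, mul_one]
  calc |μ.real (s ∩ t) - μ.real s * μ.real t|
      ≤ ‖y‖ * ‖(lpMeas ℝ ℝ m 2 μ).starProjection x -
          (ℝ ∙ Lp.const 2 μ (1 : ℝ)).starProjection x‖ := by
        rw [← hinter, ← hprod, ← Real.norm_eq_abs]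
        exact Submodule.norm_inner_sub_inner_starProjection_le
          (mem_lpMeas_indicatorConstLp hm ht (measure_ne_top μ t) (c := (1 : ℝ))) x
    _ ≤ _ := mul_le_of_le_one_left (norm_nonneg _) hy

end

section Cylinder

variable {Ω : Type*} [MeasurableSpace Ω] {I : Type*}

theorem cylAlg_le_pi (J : Set I) : cylAlg Ω J ≤ MeasurableSpace.pi :=
  iSup₂_le fun i _ => (measurable_pi_apply i).comap_le

theorem cylAlg_mono {J J' : Set I} (h : J ⊆ J') : cylAlg Ω J ≤ cylAlg Ω J' :=
  biSup_mono h

theorem iInf_cylAlg_compl_le_tailAlg {K : ℕ → Finset I} (hmono : Monotone K)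
    (hcov : ⋃ n, (K n : Set I) = Set.univ) :
    ⨅ n, cylAlg Ω ((K n : Set I)ᶜ) ≤ tailAlg Ω I := by
  refine le_iInf₂ fun J hJ => ?_
  have hdir : Directed (· ⊆ ·) fun n => (K n : Set I) :=
    Monotone.directed_le fun a b hab => Finset.coe_subset.2 (hmono hab)
  obtain ⟨N, hN⟩ := hdir.exists_mem_subset_of_finset_subset_biUnion (s := hJ.toFinset)
    (by simp [hcov])
  exact iInf_le_of_le N (cylAlg_mono (Set.compl_subset_comm.1 (by simpa using hN)))

end Cylinder

theorem stmt0_general {Ω : Type*} [MeasurableSpace Ω] {I : Type*}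
    {α : Type*} [MeasurableSpace α] (P : Measure α) [IsProbabilityMeasure P]
    (A : α → I → Ω) (hA : Measurable A)
    (K : ℕ → Finset I) (hmono : Monotone K) (hcov : (⋃ n, (K n : Set I)) = Set.univ)
    (htriv : ∀ S : Set (I → Ω), MeasurableSet[tailAlg Ω I] S →
      P (A ⁻¹' S) = 0 ∨ P (A ⁻¹' S) = 1)
    (𝒜 : Set (I → Ω)) (h𝒜 : MeasurableSet 𝒜) :
    Tendsto
      (fun n => ⨆ (B : Set (I → Ω)) (_ : MeasurableSet[cylAlg Ω ((K n : Set I)ᶜ)] B),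
        |(P (A ⁻¹' 𝒜 ∩ A ⁻¹' B)).toReal - (P (A ⁻¹' 𝒜)).toReal * (P (A ⁻¹' B)).toReal|)
      atTop (nhds 0) := by
  set μ := P.map A
  have : IsProbabilityMeasure μ := Measure.isProbabilityMeasure_map hA.aemeasurable
  set ℱ : ℕ → MeasurableSpace (I → Ω) := fun n => cylAlg Ω ((K n : Set I)ᶜ)
  have hle n : ℱ n ≤ MeasurableSpace.pi := cylAlg_le_pi _
  have hanti : Antitone ℱ := fun a b hab =>
    cylAlg_mono (Set.compl_subset_compl.2 (Finset.coe_subset.2 (hmono hab)))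
  have htriv' (s) (hs : MeasurableSet[⨅ n, ℱ n] s) : μ s = 0 ∨ μ s = 1 := by
    rw [Measure.map_apply hA (iInf_le_of_le 0 (hle 0) s hs)]
    exact htriv s (iInf_cylAlg_compl_le_tailAlg hmono hcov s hs)
  have (n : ℕ) : (lpMeas ℝ ℝ (ℱ n) 2 μ).HasOrthogonalProjection := by
    have : Fact (ℱ n ≤ MeasurableSpace.pi) := ⟨hle n⟩
    infer_instance
  have : (⨅ n, lpMeas ℝ ℝ (ℱ n) 2 μ).HasOrthogonalProjection := by
    rw [iInf_lpMeas_eq_span_one hle hanti htriv']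
    infer_instance
  have hlim := Submodule.starProjection_tendsto_iInf (fun n => lpMeas ℝ ℝ (ℱ n) 2 μ)
    (fun _ _ hab => lpMeas_mono (hanti hab)) (indicatorConstLp 2 h𝒜 (measure_ne_top μ 𝒜) (1 : ℝ))
  simp_rw [iInf_lpMeas_eq_span_one hle hanti htriv'] at hlim
  refine squeeze_zero (fun n => Real.iSup_nonneg fun B => Real.iSup_nonneg fun _ => abs_nonneg _)
    (fun n => Real.iSup_le (fun B => Real.iSup_le (fun hB => ?_) (norm_nonneg _)) (norm_nonneg _))
    (tendsto_iff_norm_sub_tendsto_zero.1 hlim)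
  have hB' : MeasurableSet B := hle n B hB
  rw [← Set.preimage_inter, ← Measure.map_apply hA (h𝒜.inter hB'), ← Measure.map_apply hA h𝒜,
    ← Measure.map_apply hA hB']
  exact abs_measureReal_inter_sub_mul_le (hle n) h𝒜 hB

theorem stmt0 {Ω : Type*} [MeasurableSpace Ω] {I : Type*} [Countable I]
    {α : Type*} [MeasurableSpace α] (P : Measure α) [IsProbabilityMeasure P]
    (A : α → I → Ω) (hA : Measurable A)
    (K : ℕ → Finset I) (hmono : Monotone K) (hcov : (⋃ n, (K n : Set I)) = Set.univ)
    (htriv : ∀ S : Set (I → Ω), MeasurableSet[tailAlg Ω I] S →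
      P (A ⁻¹' S) = 0 ∨ P (A ⁻¹' S) = 1)
    (𝒜 : Set (I → Ω)) (h𝒜 : MeasurableSet 𝒜) (hpos : 0 < P (A ⁻¹' 𝒜)) :
    Tendsto
      (fun n => ⨆ (B : Set (I → Ω)) (_ : MeasurableSet[cylAlg Ω ((K n : Set I)ᶜ)] B),
        |(P (A ⁻¹' 𝒜 ∩ A ⁻¹' B)).toReal - (P (A ⁻¹' 𝒜)).toReal * (P (A ⁻¹' B)).toReal|)
      atTop (nhds 0) :=
  stmt0_general P A hA K hmono hcov htriv 𝒜 h𝒜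
end

section
/- Let (X_i)_{i≥1} and X be random variables defined on a common probability space (Ω, P) taking values in a locally compact, separable metric space 𝕏 (equipped with its Borel σ-algebra), and let (B_i)_{i≥1} and B be measurable subsets of Ω with P(B) > 0. Suppose that: (1) X_i has the same distribution as X for every i ≥ 1; (2) X_i converges to X in probability as i → ∞; and (3) P(B_i Δ B) → 0 as i → ∞. Then for every Borel set A ⊆ 𝕏, the conditional probabilities satisfy P(X ∈ A | B) = lim_{i→∞} P(X_i ∈ A | B_i). -/
/-!
If `X i → X₀` in probability and `F` is closed, a point where `X i ∈ F` but `X₀ ∉ F` either has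
`X i` and `X₀` at distance `≥ r`, or has `X₀` in the shell `cthickening r F \ F`, whose measure
vanishes as `r → 0`. Since `X i` and `X₀` have the same law, `P (X i ∈ F, X₀ ∉ F)` equals
`P (X₀ ∈ F, X i ∉ F)`, so `P ((X i ∈ F) ∆ (X₀ ∈ F)) → 0`; approximating a Borel set from inside
by closed sets for the common law extends this to every Borel `A`. Numerators and denominators
of the conditional probabilities then converge because `|P C - P D| ≤ P (C ∆ D)`.
-/

open MeasureTheory Filter Metric Set ProbabilityTheory
open scoped ENNReal symmDiff Topology

namespace MeasureTheory

variable {Ω E ι : Type*} [MeasurableSpace Ω] {μ : Measure Ω} {l : Filter ι}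

lemma tendsto_measure_of_tendsto_measure_symmDiff [IsFiniteMeasure μ] {s : ι → Set Ω}
    {t : Set Ω} (h : Tendsto (fun i => μ (s i ∆ t)) l (𝓝 0)) :
    Tendsto (fun i => μ (s i)) l (𝓝 (μ t)) := by
  have hlower : Tendsto (fun i => μ t - μ (s i ∆ t)) l (𝓝 (μ t)) := by
    simpa using ENNReal.Tendsto.sub tendsto_const_nhds h (.inl (measure_ne_top μ t))
  have hupper : Tendsto (fun i => μ t + μ (s i ∆ t)) l (𝓝 (μ t)) := by
    simpa using tendsto_const_nhds.add h
  refine tendsto_of_tendsto_of_tendsto_of_le_of_le hlower hupper (fun i => ?_) (fun i => ?_)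
  · rw [tsub_le_iff_left, symmDiff_comm, ← tsub_le_iff_right]
    exact le_measure_symmDiff
  · rw [← tsub_le_iff_left]
    exact le_measure_symmDiff

lemma measure_inter_symmDiff_inter_le (s s' t t' : Set Ω) :
    μ ((s ∩ t) ∆ (s' ∩ t')) ≤ μ (s ∆ s') + μ (t ∆ t') :=
  calc μ ((s ∩ t) ∆ (s' ∩ t'))
      ≤ μ ((s ∩ t) ∆ (s' ∩ t)) + μ ((s' ∩ t) ∆ (s' ∩ t')) :=
        measure_symmDiff_le _ _ _
    _ ≤ μ (s ∆ s') + μ (t ∆ t') := by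
      rw [← inter_symmDiff_distrib_right, ← inter_symmDiff_distrib_left]
      gcongr
      exacts [inter_subset_left, inter_subset_right]

lemma tendstoInMeasure_of_forall_tendsto_measure_lt_dist [PseudoMetricSpace E]
    {X : ι → Ω → E} {X₀ : Ω → E}
    (h : ∀ ε : ℝ, 0 < ε →
      Tendsto (fun i => μ {ω | ε < dist (X i ω) (X₀ ω)}) l (𝓝 0)) :
    TendstoInMeasure μ X l X₀ := by
  refine tendstoInMeasure_iff_dist.2 fun ε hε => ?_
  refine tendsto_of_tendsto_of_tendsto_of_le_of_le tendsto_const_nhds (h (ε / 2) (by positivity))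
    (fun _ => zero_le) fun i => measure_mono fun ω (hω : ε ≤ _) => ?_
  change ε / 2 < _
  linarith

lemma tendsto_measure_cthickening_sdiff_of_isClosed [PseudoMetricSpace E] [MeasurableSpace E]
    [OpensMeasurableSpace E] {ν : Measure E} [IsFiniteMeasure ν] {F : Set E} (hF : IsClosed F) :
    Tendsto (fun r => ν (cthickening r F \ F)) (𝓝 0) (𝓝 0) := by
  have hlim := ENNReal.Tendsto.sub (tendsto_measure_cthickening_of_isClosed
    ⟨1, one_pos, measure_ne_top ν _⟩ hF) (tendsto_const_nhds (x := ν F))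
    (.inl (measure_ne_top ν F))
  rw [tsub_self] at hlim
  refine hlim.congr fun r => ?_
  rw [measure_sdiff (self_subset_cthickening F) hF.measurableSet.nullMeasurableSet
    (measure_ne_top ν F)]

lemma TendstoInMeasure.tendsto_measure_preimage_sdiff_of_isClosed [PseudoMetricSpace E]
    [MeasurableSpace E] [OpensMeasurableSpace E] [IsFiniteMeasure μ] {X : ι → Ω → E}
    {X₀ : Ω → E} (h : TendstoInMeasure μ X l X₀) (hX₀ : AEMeasurable X₀ μ) {F : Set E}
    (hF : IsClosed F) :
    Tendsto (fun i => μ (X i ⁻¹' F \ X₀ ⁻¹' F)) l (𝓝 0) := by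
  rw [ENNReal.tendsto_nhds_zero]
  intro ε hε
  obtain ⟨r, hrF, hr⟩ : ∃ r, μ (X₀ ⁻¹' (cthickening r F \ F)) ≤ ε / 2 ∧ 0 < r := by
    have hsmall := ENNReal.tendsto_nhds_zero.1
      (tendsto_measure_cthickening_sdiff_of_isClosed (ν := μ.map X₀) hF) _
      (ENNReal.half_pos hε.ne')
    obtain ⟨r, hrF, hr⟩ :=
      (hsmall.filter_mono nhdsWithin_le_nhds |>.and (self_mem_nhdsWithin (s := Ioi 0))).exists
    rw [Measure.map_apply_of_aemeasurable hX₀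
      (isClosed_cthickening.measurableSet.diff hF.measurableSet)] at hrF
    exact ⟨r, hrF, hr⟩
  filter_upwards [ENNReal.tendsto_nhds_zero.1 (tendstoInMeasure_iff_dist.1 h r hr) _
    (ENNReal.half_pos hε.ne')] with i hi
  calc μ (X i ⁻¹' F \ X₀ ⁻¹' F)
      ≤ μ ({ω | r ≤ dist (X i ω) (X₀ ω)} ∪ X₀ ⁻¹' (cthickening r F \ F)) := by
        refine measure_mono fun ω ⟨hXi, hX₀F⟩ => ?_
        by_cases hd : r ≤ dist (X i ω) (X₀ ω)
        · exact .inl hd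
        · refine .inr ⟨mem_cthickening_of_dist_le _ _ _ _ hXi ?_, hX₀F⟩
          rw [dist_comm]
          exact (not_le.1 hd).le
    _ ≤ ε / 2 + ε / 2 := (measure_union_le _ _).trans (add_le_add hi hrF)
    _ = ε := ENNReal.add_halves ε

lemma TendstoInMeasure.tendsto_measure_preimage_symmDiff_of_isClosed [PseudoMetricSpace E]
    [MeasurableSpace E] [OpensMeasurableSpace E] [IsFiniteMeasure μ] {X : ι → Ω → E}
    {X₀ : Ω → E} (h : TendstoInMeasure μ X l X₀) (hX₀ : AEMeasurable X₀ μ)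
    (hlaw : ∀ i, IdentDistrib (X i) X₀ μ μ) {F : Set E} (hF : IsClosed F) :
    Tendsto (fun i => μ ((X i ⁻¹' F) ∆ (X₀ ⁻¹' F))) l (𝓝 0) := by
  have hdouble (i : ι) :
      μ ((X i ⁻¹' F) ∆ (X₀ ⁻¹' F)) = 2 * μ (X i ⁻¹' F \ X₀ ⁻¹' F) := by
    have hXiF := (hlaw i).aemeasurable_fst.nullMeasurableSet_preimage hF.measurableSet
    have hX₀F := hX₀.nullMeasurableSet_preimage hF.measurableSet
    rw [measure_symmDiff_eq hXiF hX₀F, ← measure_sdiff_symm hXiF hX₀F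
      ((hlaw i).measure_mem_eq hF.measurableSet) (measure_ne_top _ _), two_mul]
  simp_rw [hdouble]
  simpa using ENNReal.Tendsto.const_mul (h.tendsto_measure_preimage_sdiff_of_isClosed hX₀ hF)
    (.inr (ENNReal.ofNat_ne_top (n := 2)))

theorem TendstoInMeasure.tendsto_measure_preimage_symmDiff [PseudoMetricSpace E]
    [MeasurableSpace E] [BorelSpace E] [IsFiniteMeasure μ] {X : ι → Ω → E} {X₀ : Ω → E}
    (h : TendstoInMeasure μ X l X₀) (hX₀ : AEMeasurable X₀ μ)
    (hlaw : ∀ i, IdentDistrib (X i) X₀ μ μ) {A : Set E} (hA : MeasurableSet A) :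
    Tendsto (fun i => μ ((X i ⁻¹' A) ∆ (X₀ ⁻¹' A))) l (𝓝 0) := by
  rw [ENNReal.tendsto_nhds_zero]
  intro ε hε
  have hε3 : 0 < ε / 3 := ENNReal.div_pos hε.ne' ENNReal.ofNat_ne_top
  obtain ⟨F, hFA, hF, hAF⟩ :=
    hA.exists_isClosed_sdiff_lt (μ := μ.map X₀) (measure_ne_top _ _) hε3.ne'
  have hAF₀ : μ (X₀ ⁻¹' (A \ F)) ≤ ε / 3 := by
    rw [← Measure.map_apply_of_aemeasurable hX₀ (hA.diff hF.measurableSet)]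
    exact hAF.le
  have hclosed := h.tendsto_measure_preimage_symmDiff_of_isClosed hX₀ hlaw hF
  filter_upwards [ENNReal.tendsto_nhds_zero.1 hclosed _ hε3] with i hi
  calc μ ((X i ⁻¹' A) ∆ (X₀ ⁻¹' A))
      ≤ μ ((X i ⁻¹' A) ∆ (X i ⁻¹' F)) + μ ((X i ⁻¹' F) ∆ (X₀ ⁻¹' F))
          + μ ((X₀ ⁻¹' F) ∆ (X₀ ⁻¹' A)) :=
        (measure_symmDiff_le _ (X₀ ⁻¹' F) _).trans (by gcongr; apply measure_symmDiff_le)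
    _ ≤ ε / 3 + ε / 3 + ε / 3 := by
        rw [← preimage_symmDiff, ← preimage_symmDiff, symmDiff_of_ge hFA, symmDiff_of_le hFA]
        refine add_le_add_three ?_ hi hAF₀
        rwa [(hlaw i).measure_mem_eq (hA.diff hF.measurableSet)]
    _ = ε := ENNReal.add_thirds ε

end MeasureTheory

theorem stmt3_general {α : Type*} [MeasurableSpace α] (P : Measure α) [IsProbabilityMeasure P]
    {𝕏 : Type*} [MetricSpace 𝕏]
    [MeasurableSpace 𝕏] [BorelSpace 𝕏]
    (X : ℕ → α → 𝕏) (X₀ : α → 𝕏)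
    (hX : ∀ i, Measurable (X i)) (hX₀ : Measurable X₀)
    (B : ℕ → Set α) (B₀ : Set α)
    (hpos : 0 < P B₀)
    -- (1) each `X i` has the same distribution as `X₀`
    (hdist : ∀ i, P.map (X i) = P.map X₀)
    -- (2) `X i → X₀` in probability
    (hprob : ∀ ε : ℝ, 0 < ε →
      Tendsto (fun i => P {a | ε < dist (X i a) (X₀ a)}) atTop (nhds 0))
    -- (3) `P (symmDiff (B i) B₀) → 0`
    (hsymm : Tendsto (fun i => P (symmDiff (B i) B₀)) atTop (nhds 0))
    (A : Set 𝕏) (hA : MeasurableSet A) :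
    Tendsto (fun i => P (X i ⁻¹' A ∩ B i) / P (B i)) atTop
      (nhds (P (X₀ ⁻¹' A ∩ B₀) / P B₀)) := by
  have hpreimage : Tendsto (fun i => P ((X i ⁻¹' A) ∆ (X₀ ⁻¹' A))) atTop (𝓝 0) :=
    (tendstoInMeasure_of_forall_tendsto_measure_lt_dist hprob).tendsto_measure_preimage_symmDiff
      hX₀.aemeasurable (fun i => ⟨(hX i).aemeasurable, hX₀.aemeasurable, hdist i⟩) hA
  have hnum : Tendsto (fun i => P (X i ⁻¹' A ∩ B i)) atTop (𝓝 (P (X₀ ⁻¹' A ∩ B₀))) := by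
    refine tendsto_measure_of_tendsto_measure_symmDiff <|
      tendsto_of_tendsto_of_tendsto_of_le_of_le tendsto_const_nhds ?_ (fun _ => zero_le)
        fun i => measure_inter_symmDiff_inter_le _ _ _ _
    simpa using hpreimage.add hsymm
  exact ENNReal.Tendsto.div hnum (.inr hpos.ne')
    (tendsto_measure_of_tendsto_measure_symmDiff hsymm) (.inl (measure_ne_top P B₀))

theorem stmt3 {α : Type*} [MeasurableSpace α] (P : Measure α) [IsProbabilityMeasure P]
    {𝕏 : Type*} [MetricSpace 𝕏] [LocallyCompactSpace 𝕏]
    [TopologicalSpace.SeparableSpace 𝕏] [MeasurableSpace 𝕏] [BorelSpace 𝕏]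
    (X : ℕ → α → 𝕏) (X₀ : α → 𝕏)
    (hX : ∀ i, Measurable (X i)) (hX₀ : Measurable X₀)
    (B : ℕ → Set α) (B₀ : Set α)
    (hB : ∀ i, MeasurableSet (B i)) (hB₀ : MeasurableSet B₀) (hpos : 0 < P B₀)
    -- (1) each `X i` has the same distribution as `X₀`
    (hdist : ∀ i, P.map (X i) = P.map X₀)
    -- (2) `X i → X₀` in probability
    (hprob : ∀ ε : ℝ, 0 < ε →
      Tendsto (fun i => P {a | ε < dist (X i a) (X₀ a)}) atTop (nhds 0))
    -- (3) `P (symmDiff (B i) B₀) → 0`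
    (hsymm : Tendsto (fun i => P (symmDiff (B i) B₀)) atTop (nhds 0))
    (A : Set 𝕏) (hA : MeasurableSet A) :
    Tendsto (fun i => P (X i ⁻¹' A ∩ B i) / P (B i)) atTop
      (nhds (P (X₀ ⁻¹' A ∩ B₀) / P B₀)) :=
  stmt3_general P X X₀ hX hX₀ B B₀ hpos hdist hprob hsymm A hA
end

section
/- Let G = (V, E) be an infinite, connected, locally finite graph that is transient and Liouville, and let X and Y be independent lazy random walks on G started at any two vertices. If the event that X and Y intersect only finitely often (i.e., that the set {(n, m) ∈ ℕ² : X_n = Y_m} is finite) has positive probability, then this event has probability one. -/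
open MeasureTheory Filter

open scoped Classical

/-- One-step transition probabilities of the lazy random walk on `G`: stay put with
probability `1/2`, otherwise move to a uniformly chosen neighbour. -/
noncomputable def lazyStep {V : Type*} (G : SimpleGraph V) (u w : V) : ENNReal :=
  if u = w then 2⁻¹ else if G.Adj u w then 2⁻¹ / ((G.neighborSet u).ncard : ENNReal) else 0

/-- `μ` is the law of the lazy random walk on `G` started at `v`: its finite-dimensional
distributions are given by the products of the lazy transition probabilities. -/
noncomputable def IsLazyWalkLaw {V : Type*} [MeasurableSpace V] (G : SimpleGraph V) (v : V)
    (μ : Measure (ℕ → V)) : Prop :=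
  ∀ (n : ℕ) (p : Fin (n + 1) → V),
    μ {x | ∀ i : Fin (n + 1), x i = p i} =
      (if p 0 = v then 1 else 0) * ∏ i : Fin n, lazyStep G (p i.castSucc) (p i.succ)

/-- A function `h : V → ℝ` is harmonic on `G` if at every vertex it equals the average of
its values over the neighbours. -/
def IsHarmonic {V : Type*} (G : SimpleGraph V) (h : V → ℝ) : Prop :=
  ∀ v, h v = (∑ᶠ w ∈ G.neighborSet v, h w) / ((G.neighborSet v).ncard : ℝ)

/-- A graph is Liouville if every bounded harmonic function on it is constant. -/
def LiouvilleGraph {V : Type*} (G : SimpleGraph V) : Prop :=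
  ∀ h : V → ℝ, IsHarmonic G h → (∃ C : ℝ, ∀ v, |h v| ≤ C) → ∀ u w, h u = h w

/-- `G` is transient: the lazy random walk started anywhere almost surely visits every
vertex only finitely often. -/
def TransientGraph {V : Type*} [MeasurableSpace V] (G : SimpleGraph V) : Prop :=
  ∀ (u : V) (μ : Measure (ℕ → V)), IsProbabilityMeasure μ → IsLazyWalkLaw G u μ →
    ∀ᵐ x ∂μ, ∀ w : V, {n : ℕ | x n = w}.Finite

open ProbabilityTheory Function
open scoped ENNReal

/-!
Let `A` be the event that the walks meet only finitely often. By transience each walk visits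
every vertex finitely often, so discarding an initial segment of either walk discards only
finitely many coincidences: `A` is invariant, up to a null set, under shifting `X` and `Y` by
independent amounts. By the Markov property, conditionally on the first `n` steps of `X` and
the first `m` steps of `Y`, the probability of `A` is `h (X n) (Y m)`, where `h x y` is the
probability of `A` for walks started at `(x, y)`. Hence `h` is bounded and harmonic in each
variable, so constant by the Liouville property. Thus `A` is independent of every cylinder
event, hence of itself, and `P A ∈ {0, 1}`.
-/

lemma SimpleGraph.Connected.countable {V : Type*} {G : SimpleGraph V} (hconn : G.Connected)
    (hlf : ∀ v, (G.neighborSet v).Finite) : Countable V := by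
  obtain ⟨u⟩ := hconn.nonempty
  have hfin : ∀ n, {v | ∃ q : G.Walk v u, q.length = n}.Finite := by
    intro n
    induction n with
    | zero => exact (Set.finite_singleton u).subset fun v ⟨q, hq⟩ => q.eq_of_length_eq_zero hq
    | succ n ih =>
      refine (ih.biUnion fun w _ => hlf w).subset ?_
      rintro v ⟨_ | ⟨hvw, q⟩, hq⟩
      · simp at hq
      · exact Set.mem_biUnion ⟨q, by simpa using hq⟩ hvw.symm
  have hcover : ⋃ n, {v | ∃ q : G.Walk v u, q.length = n} = Set.univ :=
    Set.eq_univ_of_forall fun v => Set.mem_iUnion.mpr ⟨_, (hconn.preconnected v u).some, rfl⟩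
  exact Set.countable_univ_iff.mp (hcover ▸ Set.countable_iUnion fun n => (hfin n).countable)

section Paths

variable {V : Type*}

def pathCylinder (n : ℕ) (p : ℕ → V) : Set (ℕ → V) := {x | ∀ i ≤ n, x i = p i}

def shiftPath (n : ℕ) (x : ℕ → V) : ℕ → V := fun i => x (n + i)

def appendPath (n : ℕ) (p s : ℕ → V) : ℕ → V := fun i => if i ≤ n then p i else s (i - n)

lemma appendPath_of_le {n i : ℕ} {p s : ℕ → V} (hi : i ≤ n) : appendPath n p s i = p i :=
  if_pos hi

lemma appendPath_add {n : ℕ} {p s : ℕ → V} (hs : s 0 = p n) (i : ℕ) :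
    appendPath n p s (n + i) = s i := by
  rcases Nat.eq_zero_or_pos i with rfl | hi
  · simp [appendPath, hs]
  · simp [appendPath, show ¬ n + i ≤ n by omega]

lemma pathCylinder_inter_shiftPath {n k : ℕ} {p s : ℕ → V} (hs : s 0 = p n) :
    pathCylinder n p ∩ shiftPath n ⁻¹' pathCylinder k s =
      pathCylinder (n + k) (appendPath n p s) := by
  ext x
  simp only [pathCylinder, shiftPath, Set.mem_inter_iff, Set.mem_preimage, Set.mem_ofPred_eq]
  constructor
  · rintro ⟨hp, hs'⟩ i hi
    by_cases hin : i ≤ n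
    · rw [appendPath_of_le hin, hp i hin]
    · obtain ⟨j, rfl⟩ := Nat.exists_eq_add_of_le (not_le.mp hin).le
      rw [appendPath_add hs, hs' j (by omega)]
  · intro h
    exact ⟨fun i hi => (h i (by omega)).trans (appendPath_of_le hi),
      fun i hi => (h (n + i) (by omega)).trans (appendPath_add hs i)⟩

lemma pathCylinder_inter_shiftPath_of_ne {n k : ℕ} {p s : ℕ → V} (hs : s 0 ≠ p n) :
    pathCylinder n p ∩ shiftPath n ⁻¹' pathCylinder k s = ∅ :=
  Set.eq_empty_of_forall_notMem fun _ ⟨hp, hs'⟩ =>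
    hs ((hs' 0 (Nat.zero_le k)).symm.trans (hp n le_rfl))

lemma pathCylinder_eq_iUnion_update (n : ℕ) (p : ℕ → V) :
    pathCylinder n p = ⋃ v : V, pathCylinder (n + 1) (update p (n + 1) v) := by
  ext x
  simp only [pathCylinder, Set.mem_iUnion, Set.mem_ofPred_eq]
  constructor
  · intro hx
    refine ⟨x (n + 1), fun i hi => ?_⟩
    rcases (Nat.le_succ_iff.mp hi) with hi | rfl
    · rw [update_of_ne (by omega), hx i hi]
    · rw [update_self]
  · rintro ⟨v, hv⟩ i hi
    rw [hv i (by omega), update_of_ne (by omega)]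

lemma pairwise_disjoint_pathCylinder_update (n : ℕ) (p : ℕ → V) :
    Pairwise (Disjoint on fun v : V => pathCylinder (n + 1) (update p (n + 1) v)) :=
  fun v w hvw => Set.disjoint_left.mpr fun x hv hw => hvw <| by
    simpa using (hv (n + 1) le_rfl).symm.trans (hw (n + 1) le_rfl)

variable [MeasurableSpace V]

lemma measurable_shiftPath (n : ℕ) : Measurable (shiftPath (V := V) n) :=
  measurable_pi_lambda _ fun i => measurable_pi_apply (n + i)

lemma measurableSet_pathCylinder [MeasurableSingletonClass V] (n : ℕ) (p : ℕ → V) :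
    MeasurableSet (pathCylinder n p) := by
  have : pathCylinder n p = ⋂ i ∈ Finset.range (n + 1), (fun x : ℕ → V => x i) ⁻¹' {p i} := by
    ext x
    simp [pathCylinder]
  rw [this]
  exact .biInter (Finset.range (n + 1)).countable_toSet
    fun i _ => measurable_pi_apply i (measurableSet_singleton _)

end Paths

section PathSpace

variable (V : Type*)

def pathCylinders : Set (Set (ℕ → V)) := {S | ∃ n p, S = pathCylinder n p}

variable {V}

lemma isPiSystem_pathCylinders : IsPiSystem (pathCylinders V) := by
  have hmono : ∀ {n m : ℕ} {p q : ℕ → V}, n ≤ m → (pathCylinder n p ∩ pathCylinder m q).Nonempty →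
      pathCylinder m q ⊆ pathCylinder n p := by
    rintro n m p q hnm ⟨x, hxp, hxq⟩ y hy i hi
    rw [hy i (hi.trans hnm), ← hxq i (hi.trans hnm), hxp i hi]
  rintro _ ⟨n, p, rfl⟩ _ ⟨m, q, rfl⟩ hne
  rcases le_total n m with h | h
  · exact ⟨m, q, Set.inter_eq_self_of_subset_right (hmono h hne)⟩
  · exact ⟨n, p, Set.inter_eq_self_of_subset_left (hmono h (Set.inter_comm _ _ ▸ hne))⟩

lemma isCountablySpanning_pathCylinders [Countable V] [Nonempty V] :
    IsCountablySpanning (pathCylinders V) := by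
  obtain ⟨f, hf⟩ := exists_surjective_nat V
  refine ⟨fun k => pathCylinder 0 fun _ => f k, fun k => ⟨0, _, rfl⟩, ?_⟩
  refine Set.eq_univ_of_forall fun x => Set.mem_iUnion.mpr ?_
  obtain ⟨k, hk⟩ := hf (x 0)
  exact ⟨k, fun i hi => by rw [Nat.le_zero.mp hi, hk]⟩

variable [MeasurableSpace V] [MeasurableSingletonClass V]

lemma generateFrom_pathCylinders [Countable V] :
    MeasurableSpace.generateFrom (pathCylinders V) = MeasurableSpace.pi := by
  refine le_antisymm (MeasurableSpace.generateFrom_le ?_) (iSup_le fun i => ?_)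
  · rintro _ ⟨n, p, rfl⟩
    exact measurableSet_pathCylinder n p
  refine measurable_iff_comap_le.mp (@measurable_to_countable' V _ _ _
    (MeasurableSpace.generateFrom (pathCylinders V)) _ fun v => ?_)
  have : (fun x : ℕ → V => x i) ⁻¹' {v} =
      ⋃ q : Fin i → V, pathCylinder i fun j => if h : j < i then q ⟨j, h⟩ else v := by
    ext x
    simp only [Set.mem_preimage, Set.mem_singleton_iff, Set.mem_iUnion, pathCylinder,
      Set.mem_ofPred_eq]
    constructor
    · rintro rfl
      refine ⟨fun j => x j, fun j _ => ?_⟩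
      split_ifs with h
      · rfl
      · simp [show j = i by omega]
    · rintro ⟨q, hq⟩
      simpa using hq i le_rfl
  rw [this]
  exact .iUnion fun q => MeasurableSpace.measurableSet_generateFrom ⟨i, _, rfl⟩

lemma measure_ext_of_pathCylinder_prod [Countable V] [Nonempty V]
    {μ ν : Measure ((ℕ → V) × (ℕ → V))} [IsFiniteMeasure μ]
    (h : ∀ n p m r,
      μ (pathCylinder n p ×ˢ pathCylinder m r) = ν (pathCylinder n p ×ˢ pathCylinder m r))
    (huniv : μ Set.univ = ν Set.univ) : μ = ν := by
  refine ext_of_generate_finite _ (generateFrom_eq_prod generateFrom_pathCylinders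
    generateFrom_pathCylinders isCountablySpanning_pathCylinders
    isCountablySpanning_pathCylinders).symm
    (isPiSystem_pathCylinders.prod isPiSystem_pathCylinders) ?_ huniv
  rintro _ ⟨_, ⟨n, p, rfl⟩, _, ⟨m, r, rfl⟩, rfl⟩
  exact h n p m r

end PathSpace

section LazyWalk

open Finset

variable {V : Type*} {G : SimpleGraph V}

variable (G) in
noncomputable def pathWeight (v : V) (n : ℕ) (p : ℕ → V) : ℝ≥0∞ :=
  (if p 0 = v then 1 else 0) * ∏ i ∈ range n, lazyStep G (p i) (p (i + 1))

lemma pathWeight_of_ne {v : V} {p : ℕ → V} (h : p 0 ≠ v) (n : ℕ) : pathWeight G v n p = 0 := by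
  simp [pathWeight, h]

lemma pathWeight_append {n k : ℕ} {p s : ℕ → V} (hs : s 0 = p n) (v : V) :
    pathWeight G v (n + k) (appendPath n p s) = pathWeight G v n p * pathWeight G (p n) k s := by
  have hp : ∀ i ∈ range n, lazyStep G (appendPath n p s i) (appendPath n p s (i + 1)) =
      lazyStep G (p i) (p (i + 1)) := fun i hi => by
    rw [appendPath_of_le (by simp at hi; omega), appendPath_of_le (by simp at hi; omega)]
  have hs' : ∀ i ∈ range k, lazyStep G (appendPath n p s (n + i)) (appendPath n p s (n + i + 1)) =
      lazyStep G (s i) (s (i + 1)) := fun i _ => by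
    rw [appendPath_add hs, add_assoc, appendPath_add hs]
  simp only [pathWeight, prod_range_add, prod_congr rfl hp, prod_congr rfl hs', if_pos hs,
    appendPath_of_le (Nat.zero_le n)]
  ring

lemma pathWeight_update (v : V) (n : ℕ) (p : ℕ → V) (w : V) :
    pathWeight G v (n + 1) (update p (n + 1) w) = pathWeight G v n p * lazyStep G (p n) w := by
  have hp : ∀ i ∈ range n, lazyStep G (update p (n + 1) w i) (update p (n + 1) w (i + 1)) =
      lazyStep G (p i) (p (i + 1)) := fun i hi => by
    rw [update_of_ne (by simp at hi; omega), update_of_ne (by simp at hi; omega)]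
  simp only [pathWeight, prod_range_succ, prod_congr rfl hp, update_self,
    update_of_ne (show n ≠ n + 1 by omega), update_of_ne (show 0 ≠ n + 1 by omega)]
  ring

lemma pathWeight_walk_ne_zero {v w : V} (q : G.Walk v w) :
    pathWeight G v q.length q.getVert ≠ 0 := by
  simp only [pathWeight, q.getVert_zero, if_true, one_mul, prod_ne_zero_iff, mem_range]
  intro i hi
  have hadj := q.adj_getVert_succ hi
  simp [lazyStep, hadj.ne, hadj]

variable [MeasurableSpace V] {v : V} {μ : Measure (ℕ → V)}

lemma IsLazyWalkLaw.measure_pathCylinder (hμ : IsLazyWalkLaw G v μ) (n : ℕ) (p : ℕ → V) :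
    μ (pathCylinder n p) = pathWeight G v n p := by
  have hcyl : pathCylinder n p = {x : ℕ → V | ∀ i : Fin (n + 1), x i = p i} := by
    ext x
    exact ⟨fun hx i => hx i (Nat.lt_succ_iff.mp i.isLt), fun hx i hi => hx ⟨i, by omega⟩⟩
  rw [hcyl, hμ n, pathWeight, ← Fin.prod_univ_eq_prod_range (fun i => lazyStep G (p i) (p (i + 1)))]
  congr 1

lemma IsLazyWalkLaw.measure_pathCylinder_inter_shiftPath (hμ : IsLazyWalkLaw G v μ)
    (n : ℕ) (p : ℕ → V) (k : ℕ) (s : ℕ → V) :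
    μ (pathCylinder n p ∩ shiftPath n ⁻¹' pathCylinder k s) =
      pathWeight G v n p * pathWeight G (p n) k s := by
  by_cases hs : s 0 = p n
  · rw [pathCylinder_inter_shiftPath hs, hμ.measure_pathCylinder, pathWeight_append hs]
  · rw [pathCylinder_inter_shiftPath_of_ne hs, pathWeight_of_ne hs, measure_empty, mul_zero]

end LazyWalk

section Harmonic

open Finset

variable {V : Type*}

def IsLazyHarmonic (G : SimpleGraph V) (f : V → ℝ≥0∞) : Prop :=
  ∀ x, f x = ∑' y, lazyStep G x y * f y

variable {G : SimpleGraph V}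

lemma IsLazyHarmonic.isHarmonic_toReal (hlf : ∀ v, (G.neighborSet v).Finite)
    (hnbr : ∀ v, ∃ w, G.Adj v w) {f : V → ℝ≥0∞} (hf : IsLazyHarmonic G f)
    (hfin : ∀ x, f x ≠ ∞) : IsHarmonic G fun x => (f x).toReal := by
  intro v
  set N := (hlf v).toFinset
  have hmemN : ∀ {w}, w ∈ N ↔ G.Adj v w := by simp [N]
  have hd : 0 < N.card := card_pos.mpr ⟨_, hmemN.mpr (hnbr v).choose_spec⟩
  have hstep : ∀ w ∈ N, lazyStep G v w = 2⁻¹ / N.card := fun w hw => by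
    rw [lazyStep, if_neg (hmemN.mp hw).ne, if_pos (hmemN.mp hw),
      Set.ncard_eq_toFinset_card _ (hlf v)]
  have hc : (2⁻¹ / N.card : ℝ≥0∞) ≠ ∞ := ENNReal.div_ne_top (by simp) (by simpa using hd.ne')
  have hzero : ∀ w ∉ insert v N, lazyStep G v w * f w = 0 := fun w hw => by
    simp only [mem_insert, hmemN, not_or] at hw
    simp [lazyStep, Ne.symm hw.1, hw.2]
  have hmean : f v = 2⁻¹ * f v + ∑ w ∈ N, 2⁻¹ / N.card * f w :=
    calc f v = ∑ w ∈ insert v N, lazyStep G v w * f w := (hf v).trans (tsum_eq_sum hzero)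
      _ = _ := by
        rw [sum_insert (by simp [hmemN]), lazyStep, if_pos rfl,
          sum_congr rfl fun w hw => by rw [hstep w hw]]
  have hreal := congrArg ENNReal.toReal hmean
  rw [ENNReal.toReal_add (ENNReal.mul_ne_top (by simp) (hfin v))
    (ENNReal.sum_ne_top.mpr fun w _ => ENNReal.mul_ne_top hc (hfin w)),
    ENNReal.toReal_sum fun w _ => ENNReal.mul_ne_top hc (hfin w)] at hreal
  simp only [ENNReal.toReal_mul, ENNReal.toReal_div, ENNReal.toReal_inv, ENNReal.toReal_ofNat,
    ENNReal.toReal_natCast] at hreal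
  rw [← mul_sum] at hreal
  show (f v).toReal = (∑ᶠ w ∈ G.neighborSet v, (f w).toReal) / _
  rw [finsum_mem_eq_finite_toFinset_sum _ (hlf v), Set.ncard_eq_toFinset_card _ (hlf v)]
  change (f v).toReal = (∑ w ∈ N, (f w).toReal) / (N.card : ℝ)
  have hd' : (N.card : ℝ) ≠ 0 := Nat.cast_ne_zero.mpr hd.ne'
  rw [eq_div_iff hd']
  field_simp at hreal
  linarith

lemma LiouvilleGraph.eq_of_isLazyHarmonic (hL : LiouvilleGraph G)
    (hlf : ∀ v, (G.neighborSet v).Finite) (hnbr : ∀ v, ∃ w, G.Adj v w) {f : V → ℝ≥0∞}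
    (hf : IsLazyHarmonic G f) {C : ℝ≥0∞} (hC : C ≠ ∞) (hbdd : ∀ x, f x ≤ C) (x y : V) :
    f x = f y := by
  have hfin : ∀ x, f x ≠ ∞ := fun x => ne_top_of_le_ne_top hC (hbdd x)
  refine (ENNReal.toReal_eq_toReal_iff' (hfin x) (hfin y)).mp ?_
  refine hL _ (hf.isHarmonic_toReal hlf hnbr hfin) ⟨C.toReal, fun z => ?_⟩ x y
  rw [abs_of_nonneg ENNReal.toReal_nonneg]
  exact ENNReal.toReal_mono hC (hbdd z)

end Harmonic

section WalkPair

variable {V α : Type*}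

def pairCylinderEvent (X Y : α → ℕ → V) (n m : ℕ) (p r : ℕ → V) : Set α :=
  X ⁻¹' pathCylinder n p ∩ Y ⁻¹' pathCylinder m r

def pairShift (X Y : α → ℕ → V) (n m : ℕ) (a : α) : (ℕ → V) × (ℕ → V) :=
  (shiftPath n (X a), shiftPath m (Y a))

lemma pairCylinderEvent_comm (X Y : α → ℕ → V) (n m : ℕ) (p r : ℕ → V) :
    pairCylinderEvent Y X m n r p = pairCylinderEvent X Y n m p r :=
  Set.inter_comm _ _

variable [MeasurableSpace V] [MeasurableSpace α]

structure IsIndepLazyWalkPair (G : SimpleGraph V) (P : Measure α) (u₀ v₀ : V)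
    (X Y : α → ℕ → V) : Prop where
  measurable_fst : Measurable X
  measurable_snd : Measurable Y
  law_fst : IsLazyWalkLaw G u₀ (P.map X)
  law_snd : IsLazyWalkLaw G v₀ (P.map Y)
  indepFun : IndepFun X Y P

variable {G : SimpleGraph V} {P : Measure α} {u₀ v₀ : V} {X Y : α → ℕ → V}

namespace IsIndepLazyWalkPair

lemma symm (hW : IsIndepLazyWalkPair G P u₀ v₀ X Y) : IsIndepLazyWalkPair G P v₀ u₀ Y X :=
  ⟨hW.measurable_snd, hW.measurable_fst, hW.law_snd, hW.law_fst, hW.indepFun.symm⟩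

variable (hW : IsIndepLazyWalkPair G P u₀ v₀ X Y)
include hW

lemma measurable_pairShift (n m : ℕ) : Measurable (pairShift X Y n m) :=
  ((measurable_shiftPath n).comp hW.measurable_fst).prodMk
    ((measurable_shiftPath m).comp hW.measurable_snd)

lemma measure_preimage_inter_preimage {S T : Set (ℕ → V)} (hS : MeasurableSet S)
    (hT : MeasurableSet T) : P (X ⁻¹' S ∩ Y ⁻¹' T) = P.map X S * P.map Y T := by
  rw [hW.indepFun.measure_inter_preimage_eq_mul _ _ hS hT,
    Measure.map_apply hW.measurable_fst hS, Measure.map_apply hW.measurable_snd hT]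

variable [MeasurableSingletonClass V]

lemma measurableSet_pairCylinderEvent (n m : ℕ) (p r : ℕ → V) :
    MeasurableSet (pairCylinderEvent X Y n m p r) :=
  (hW.measurable_fst (measurableSet_pathCylinder n p)).inter
    (hW.measurable_snd (measurableSet_pathCylinder m r))

lemma measure_pairCylinderEvent (n m : ℕ) (p r : ℕ → V) :
    P (pairCylinderEvent X Y n m p r) = pathWeight G u₀ n p * pathWeight G v₀ m r := by
  rw [pairCylinderEvent, hW.measure_preimage_inter_preimage (measurableSet_pathCylinder n p)
    (measurableSet_pathCylinder m r), hW.law_fst.measure_pathCylinder,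
    hW.law_snd.measure_pathCylinder]

lemma measure_pairShift_preimage_prod_inter (n m : ℕ) (p r : ℕ → V) (k l : ℕ) (s t : ℕ → V) :
    P (pairShift X Y n m ⁻¹' (pathCylinder k s ×ˢ pathCylinder l t) ∩
        pairCylinderEvent X Y n m p r) =
      P (pairCylinderEvent X Y n m p r) * (pathWeight G (p n) k s * pathWeight G (r m) l t) := by
  have hset : pairShift X Y n m ⁻¹' (pathCylinder k s ×ˢ pathCylinder l t) ∩
      pairCylinderEvent X Y n m p r =
      X ⁻¹' (pathCylinder n p ∩ shiftPath n ⁻¹' pathCylinder k s) ∩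
        Y ⁻¹' (pathCylinder m r ∩ shiftPath m ⁻¹' pathCylinder l t) := by
    ext a
    simp only [pairShift, pairCylinderEvent, Set.mem_inter_iff, Set.mem_preimage, Set.mem_prod]
    tauto
  have hmeas : ∀ n k (p s : ℕ → V),
      MeasurableSet (pathCylinder n p ∩ shiftPath n ⁻¹' pathCylinder k s) := fun n k p s =>
    (measurableSet_pathCylinder n p).inter
      (measurable_shiftPath n (measurableSet_pathCylinder k s))
  rw [hset, hW.measure_preimage_inter_preimage (hmeas n k p s) (hmeas m l r t),
    hW.law_fst.measure_pathCylinder_inter_shiftPath,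
    hW.law_snd.measure_pathCylinder_inter_shiftPath, hW.measure_pairCylinderEvent]
  ring

lemma measure_inter_pairCylinderEvent_eq_tsum_fst [Countable V] {A : Set α} (hA : MeasurableSet A)
    (n m : ℕ) (p r : ℕ → V) :
    P (A ∩ pairCylinderEvent X Y n m p r) =
      ∑' w, P (A ∩ pairCylinderEvent X Y (n + 1) m (update p (n + 1) w) r) := by
  unfold pairCylinderEvent
  rw [pathCylinder_eq_iUnion_update n p, Set.preimage_iUnion,
    Set.iUnion_inter, Set.inter_iUnion, measure_iUnion]
  · exact fun v w hvw => ((pairwise_disjoint_pathCylinder_update n p hvw).preimage X).mono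
      (fun _ ha => ha.2.1) (fun _ ha => ha.2.1)
  · exact fun w => hA.inter (hW.measurableSet_pairCylinderEvent _ _ _ _)

/-- Markov property of the pair: conditioned on a cylinder event, the law of the shifted pair
depends only on the endpoints of the cylinder (cross-multiplied, so null cylinders need no care). -/
lemma measure_pairShift_preimage_inter_mul [IsFiniteMeasure P] [Countable V] [Nonempty V]
    {n m n' m' : ℕ} {p r p' r' : ℕ → V} (hp : p n = p' n') (hr : r m = r' m')
    {S : Set ((ℕ → V) × (ℕ → V))} (hS : MeasurableSet S) :
    P (pairShift X Y n m ⁻¹' S ∩ pairCylinderEvent X Y n m p r) *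
        P (pairCylinderEvent X Y n' m' p' r') =
      P (pairShift X Y n' m' ⁻¹' S ∩ pairCylinderEvent X Y n' m' p' r') *
        P (pairCylinderEvent X Y n m p r) := by
  have hlaw : ∀ {n m : ℕ} {B : Set α} {T}, MeasurableSet T →
      (P.restrict B).map (pairShift X Y n m) T = P (pairShift X Y n m ⁻¹' T ∩ B) := fun hT => by
    rw [Measure.map_apply (hW.measurable_pairShift _ _) hT,
      Measure.restrict_apply (hW.measurable_pairShift _ _ hT)]
  have hext : P (pairCylinderEvent X Y n' m' p' r') •
      (P.restrict (pairCylinderEvent X Y n m p r)).map (pairShift X Y n m) =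
      P (pairCylinderEvent X Y n m p r) •
      (P.restrict (pairCylinderEvent X Y n' m' p' r')).map (pairShift X Y n' m') := by
    have : IsFiniteMeasure (P (pairCylinderEvent X Y n' m' p' r') •
      (P.restrict (pairCylinderEvent X Y n m p r)).map (pairShift X Y n m)) :=
      ⟨by simpa [hlaw MeasurableSet.univ] using
        ENNReal.mul_lt_top (measure_lt_top P _) (measure_lt_top P _)⟩
    refine measure_ext_of_pathCylinder_prod (fun k s l t => ?_) ?_
    · have hR := (measurableSet_pathCylinder k s).prod (measurableSet_pathCylinder l t)
      simp only [Measure.smul_apply, smul_eq_mul, hlaw hR,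
        hW.measure_pairShift_preimage_prod_inter, hp, hr]
      ring
    · simp only [Measure.smul_apply, smul_eq_mul, hlaw MeasurableSet.univ, Set.preimage_univ,
        Set.univ_inter, mul_comm]
  have := congrArg (· S) hext
  simp only [Measure.smul_apply, smul_eq_mul, hlaw hS] at this
  rw [mul_comm, this, mul_comm]

end IsIndepLazyWalkPair

end WalkPair

section ZeroOneLaw

variable {V α : Type*} {G : SimpleGraph V}

noncomputable def reachEvent (X Y : α → ℕ → V) (hconn : G.Connected) (u₀ v₀ x y : V) : Set α :=
  pairCylinderEvent X Y (hconn.preconnected u₀ x).some.length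
    (hconn.preconnected v₀ y).some.length (hconn.preconnected u₀ x).some.getVert
    (hconn.preconnected v₀ y).some.getVert

variable [MeasurableSpace α] (P : Measure α) (X Y : α → ℕ → V)

/-- The probability of `D` for the pair started at `(x, y)`. Only walks started at `u₀` and `v₀`
are available, so it is realised by conditioning on a positive-probability cylinder event
ending at `(x, y)`. -/
noncomputable def startProb (hconn : G.Connected) (u₀ v₀ : V) (D : Set ((ℕ → V) × (ℕ → V)))
    (x y : V) : ℝ≥0∞ :=
  P ((fun a => (X a, Y a)) ⁻¹' D ∩ reachEvent X Y hconn u₀ v₀ x y) /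
    P (reachEvent X Y hconn u₀ v₀ x y)

def IsPairShiftInvariant (D : Set ((ℕ → V) × (ℕ → V))) : Prop :=
  ∀ n m, pairShift X Y n m ⁻¹' D =ᵐ[P] (fun a => (X a, Y a)) ⁻¹' D

variable {P X Y}

lemma IsPairShiftInvariant.swap {D : Set ((ℕ → V) × (ℕ → V))}
    (hinv : IsPairShiftInvariant P X Y D) : IsPairShiftInvariant P Y X (Prod.swap ⁻¹' D) :=
  fun n m => hinv m n

lemma IsPairShiftInvariant.measure_inter {D : Set ((ℕ → V) × (ℕ → V))}
    (hinv : IsPairShiftInvariant P X Y D) (n m : ℕ) (B : Set α) :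
    P (pairShift X Y n m ⁻¹' D ∩ B) = P ((fun a => (X a, Y a)) ⁻¹' D ∩ B) :=
  measure_congr ((hinv n m).inter (ae_eq_refl B))

lemma startProb_swap (hconn : G.Connected) (u₀ v₀ : V) (D : Set ((ℕ → V) × (ℕ → V))) (x y : V) :
    startProb P Y X hconn v₀ u₀ (Prod.swap ⁻¹' D) y x = startProb P X Y hconn u₀ v₀ D x y := by
  unfold startProb reachEvent
  rw [pairCylinderEvent_comm]
  rfl

lemma startProb_le_one (hconn : G.Connected) (u₀ v₀ : V) (D : Set ((ℕ → V) × (ℕ → V)))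
    (x y : V) : startProb P X Y hconn u₀ v₀ D x y ≤ 1 :=
  ENNReal.div_le_of_le_mul (by rw [one_mul]; exact measure_mono Set.inter_subset_right)

variable [MeasurableSpace V] [MeasurableSingletonClass V] {u₀ v₀ : V}
  (hW : IsIndepLazyWalkPair G P u₀ v₀ X Y) (hconn : G.Connected)
include hW hconn

lemma IsIndepLazyWalkPair.measure_reachEvent_ne_zero (x y : V) :
    P (reachEvent X Y hconn u₀ v₀ x y) ≠ 0 := by
  rw [reachEvent, hW.measure_pairCylinderEvent]
  exact mul_ne_zero (pathWeight_walk_ne_zero _) (pathWeight_walk_ne_zero _)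

variable [IsFiniteMeasure P] [Countable V]
  {D : Set ((ℕ → V) × (ℕ → V))} (hD : MeasurableSet D) (hinv : IsPairShiftInvariant P X Y D)
include hD hinv

/-- An invariant event is conditionally independent of the past given the current positions. -/
lemma IsIndepLazyWalkPair.measure_inter_pairCylinderEvent (n m : ℕ) (p r : ℕ → V) :
    P ((fun a => (X a, Y a)) ⁻¹' D ∩ pairCylinderEvent X Y n m p r) =
      P (pairCylinderEvent X Y n m p r) * startProb P X Y hconn u₀ v₀ D (p n) (r m) := by
  have : Nonempty V := hconn.nonempty
  have hmarkov := hW.measure_pairShift_preimage_inter_mul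
    (hconn.preconnected u₀ (p n)).some.getVert_length.symm
    (hconn.preconnected v₀ (r m)).some.getVert_length.symm hD
  rw [hinv.measure_inter, hinv.measure_inter] at hmarkov
  rw [startProb, ← mul_div_assoc, ENNReal.eq_div_iff (hW.measure_reachEvent_ne_zero hconn _ _)
    (measure_ne_top _ _), mul_comm]
  exact hmarkov.trans (mul_comm _ _)

lemma IsIndepLazyWalkPair.isLazyHarmonic_startProb_left (y : V) :
    IsLazyHarmonic G fun x => startProb P X Y hconn u₀ v₀ D x y := by
  intro x
  set q₁ := (hconn.preconnected u₀ x).some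
  set q₂ := (hconn.preconnected v₀ y).some
  have hE : reachEvent X Y hconn u₀ v₀ x y =
      pairCylinderEvent X Y q₁.length q₂.length q₁.getVert q₂.getVert := rfl
  have hA : MeasurableSet ((fun a => (X a, Y a)) ⁻¹' D) :=
    (hW.measurable_fst.prodMk hW.measurable_snd) hD
  refine (ENNReal.mul_right_inj (hW.measure_reachEvent_ne_zero hconn x y)
    (measure_ne_top _ _)).mp ?_
  calc P (reachEvent X Y hconn u₀ v₀ x y) * startProb P X Y hconn u₀ v₀ D x y
      = P ((fun a => (X a, Y a)) ⁻¹' D ∩ reachEvent X Y hconn u₀ v₀ x y) := by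
        rw [hE, hW.measure_inter_pairCylinderEvent hconn hD hinv, q₁.getVert_length,
          q₂.getVert_length]
    _ = ∑' w, P ((fun a => (X a, Y a)) ⁻¹' D ∩
          pairCylinderEvent X Y (q₁.length + 1) q₂.length (update q₁.getVert (q₁.length + 1) w)
            q₂.getVert) :=
        hW.measure_inter_pairCylinderEvent_eq_tsum_fst hA _ _ _ _
    _ = ∑' w, P (reachEvent X Y hconn u₀ v₀ x y) *
          (lazyStep G x w * startProb P X Y hconn u₀ v₀ D w y) := by
        congr 1 with w
        rw [hW.measure_inter_pairCylinderEvent hconn hD hinv, hW.measure_pairCylinderEvent,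
          hE, hW.measure_pairCylinderEvent, pathWeight_update, update_self, q₁.getVert_length,
          q₂.getVert_length]
        ring
    _ = _ := ENNReal.tsum_mul_left

lemma IsIndepLazyWalkPair.isLazyHarmonic_startProb_right (x : V) :
    IsLazyHarmonic G fun y => startProb P X Y hconn u₀ v₀ D x y := by
  simpa only [startProb_swap] using
    hW.symm.isLazyHarmonic_startProb_left hconn (hD.preimage measurable_swap) hinv.swap x

lemma IsIndepLazyWalkPair.startProb_eq_startProb [Nontrivial V]
    (hlf : ∀ v, (G.neighborSet v).Finite) (hL : LiouvilleGraph G) (x y : V) :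
    startProb P X Y hconn u₀ v₀ D x y = startProb P X Y hconn u₀ v₀ D u₀ v₀ := by
  have hnbr : ∀ v, ∃ w, G.Adj v w := fun v =>
    G.exists_adj_iff_not_isIsolated.mpr (hconn.preconnected.not_isIsolated v)
  rw [hL.eq_of_isLazyHarmonic hlf hnbr (hW.isLazyHarmonic_startProb_left hconn hD hinv y)
      ENNReal.one_ne_top (startProb_le_one hconn u₀ v₀ D · y) x u₀,
    hL.eq_of_isLazyHarmonic hlf hnbr (hW.isLazyHarmonic_startProb_right hconn hD hinv u₀)
      ENNReal.one_ne_top (startProb_le_one hconn u₀ v₀ D u₀) y v₀]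

end ZeroOneLaw

theorem IsIndepLazyWalkPair.measure_eq_zero_or_one_of_isPairShiftInvariant {V α : Type*}
    [MeasurableSpace V] [MeasurableSingletonClass V] [Countable V] [Nontrivial V]
    [MeasurableSpace α] {G : SimpleGraph V} {P : Measure α} [IsProbabilityMeasure P]
    {u₀ v₀ : V} {X Y : α → ℕ → V} (hW : IsIndepLazyWalkPair G P u₀ v₀ X Y)
    (hconn : G.Connected) (hlf : ∀ v, (G.neighborSet v).Finite) (hL : LiouvilleGraph G)
    {D : Set ((ℕ → V) × (ℕ → V))} (hD : MeasurableSet D) (hinv : IsPairShiftInvariant P X Y D) :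
    P ((fun a => (X a, Y a)) ⁻¹' D) = 0 ∨ P ((fun a => (X a, Y a)) ⁻¹' D) = 1 := by
  set Z : α → (ℕ → V) × (ℕ → V) := fun a => (X a, Y a)
  have hZ : Measurable Z := hW.measurable_fst.prodMk hW.measurable_snd
  have hindep : ∀ n m p r, P (Z ⁻¹' D ∩ pairCylinderEvent X Y n m p r) =
      P (pairCylinderEvent X Y n m p r) * startProb P X Y hconn u₀ v₀ D u₀ v₀ := fun n m p r => by
    rw [hW.measure_inter_pairCylinderEvent hconn hD hinv,
      hW.startProb_eq_startProb hconn hD hinv hlf hL]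
  have hstart : startProb P X Y hconn u₀ v₀ D u₀ v₀ = P (Z ⁻¹' D) := by
    have hB : P (pairCylinderEvent X Y 0 0 (fun _ => u₀) fun _ => v₀) = 1 := by
      simp [hW.measure_pairCylinderEvent, pathWeight]
    have h := hindep 0 0 (fun _ => u₀) fun _ => v₀
    rwa [hB, one_mul, measure_inter_conull ((prob_compl_eq_zero_iff
      (hW.measurableSet_pairCylinderEvent _ _ _ _)).mpr hB), eq_comm] at h
  have hlaw : (P.restrict (Z ⁻¹' D)).map Z = P (Z ⁻¹' D) • P.map Z := by
    refine measure_ext_of_pathCylinder_prod (fun n p m r => ?_) ?_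
    · have hR := (measurableSet_pathCylinder n p).prod (measurableSet_pathCylinder m r)
      rw [Measure.map_apply hZ hR, Measure.restrict_apply (hZ hR), Measure.smul_apply,
        Measure.map_apply hZ hR, smul_eq_mul, mul_comm, ← hstart, Set.inter_comm]
      exact hindep n m p r
    · simp [Measure.map_apply hZ MeasurableSet.univ]
  have hsq : P (Z ⁻¹' D) * 1 = P (Z ⁻¹' D) * P (Z ⁻¹' D) := by
    simpa [Measure.map_apply hZ hD, Measure.restrict_apply (hZ hD)] using congrArg (· D) hlaw
  rcases eq_or_ne (P (Z ⁻¹' D)) 0 with h | h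
  · exact .inl h
  · exact .inr ((ENNReal.mul_right_inj h (measure_ne_top _ _)).mp hsq).symm

section Transience

variable {V : Type*}

def coincidences (x y : ℕ → V) : Set (ℕ × ℕ) := {q | x q.1 = y q.2}

lemma finite_coincidences_shiftPath_iff {x y : ℕ → V} (hx : ∀ w, {i | x i = w}.Finite)
    (hy : ∀ w, {j | y j = w}.Finite) (n m : ℕ) :
    (coincidences (shiftPath n x) (shiftPath m y)).Finite ↔ (coincidences x y).Finite := by
  set f : ℕ × ℕ → ℕ × ℕ := fun q => (n + q.1, m + q.2)
  have hf : Injective f := fun a b h => by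
    simp only [f, Prod.ext_iff] at h ⊢
    omega
  have hout : (coincidences x y \ Set.range f).Finite := by
    have hrows := (Set.finite_lt_nat n).biUnion fun i _ => (Set.finite_singleton i).prod (hy (x i))
    have hcols := (Set.finite_lt_nat m).biUnion fun j _ => (hx (y j)).prod (Set.finite_singleton j)
    refine (hrows.union hcols).subset ?_
    rintro ⟨i, j⟩ ⟨hij, hnot⟩
    by_cases hi : i < n
    · exact .inl (Set.mem_biUnion hi ⟨rfl, hij.symm⟩)
    by_cases hj : j < m
    · exact .inr (Set.mem_biUnion hj ⟨hij, rfl⟩)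
    exact absurd ⟨(i - n, j - m), by simp only [f]; congr 1 <;> omega⟩ hnot
  have hpre : coincidences (shiftPath n x) (shiftPath m y) = f ⁻¹' coincidences x y := rfl
  rw [hpre, ← Set.finite_image_iff hf.injOn, Set.image_preimage_eq_inter_range]
  exact ⟨fun h => Set.inter_union_sdiff (coincidences x y) _ ▸ h.union hout,
    fun h => h.subset Set.inter_subset_left⟩

lemma measurableSet_finite_coincidences [MeasurableSpace V] [MeasurableSingletonClass V]
    [Countable V] : MeasurableSet {z : (ℕ → V) × (ℕ → V) | (coincidences z.1 z.2).Finite} := by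
  simp only [Set.finite_iff_bddAbove, bddAbove_def, coincidences, Set.mem_ofPred_eq]
  refine Measurable.setOf (Measurable.exists fun N => Measurable.forall fun q =>
    Measurable.imp ?_ measurable_const)
  exact measurableSet_setOfPred.mp <| measurableSet_eq_fun
    ((measurable_pi_apply q.1).comp measurable_fst) ((measurable_pi_apply q.2).comp measurable_snd)

lemma TransientGraph.ae_finite_visits [MeasurableSpace V] {G : SimpleGraph V}
    (htrans : TransientGraph G) {α : Type*} [MeasurableSpace α] {P : Measure α}
    [IsProbabilityMeasure P] {u : V} {X : α → ℕ → V} (hX : Measurable X)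
    (hlaw : IsLazyWalkLaw G u (P.map X)) : ∀ᵐ a ∂P, ∀ w, {n | X a n = w}.Finite :=
  ae_of_ae_map hX.aemeasurable
    (htrans u _ (Measure.isProbabilityMeasure_map hX.aemeasurable) hlaw)

end Transience

theorem stmt7 {V : Type*} [MeasurableSpace V] [DiscreteMeasurableSpace V] [Infinite V]
    (G : SimpleGraph V) (hconn : G.Connected) (hlf : ∀ v, (G.neighborSet v).Finite)
    (htrans : TransientGraph G) (hLiou : LiouvilleGraph G)
    {α : Type*} [MeasurableSpace α] (P : Measure α) [IsProbabilityMeasure P]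
    (u₀ v₀ : V) (X Y : α → ℕ → V) (hX : Measurable X) (hY : Measurable Y)
    (hXlaw : IsLazyWalkLaw G u₀ (P.map X)) (hYlaw : IsLazyWalkLaw G v₀ (P.map Y))
    (hindep : ProbabilityTheory.IndepFun X Y P)
    (hpos : 0 < P {a | {p : ℕ × ℕ | X a p.1 = Y a p.2}.Finite}) :
    P {a | {p : ℕ × ℕ | X a p.1 = Y a p.2}.Finite} = 1 := by
  have : Countable V := hconn.countable hlf
  have hW : IsIndepLazyWalkPair G P u₀ v₀ X Y := ⟨hX, hY, hXlaw, hYlaw, hindep⟩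
  have hinv : IsPairShiftInvariant P X Y {z | (coincidences z.1 z.2).Finite} := fun n m => by
    filter_upwards [htrans.ae_finite_visits hX hXlaw, htrans.ae_finite_visits hY hYlaw]
      with a hXa hYa
    exact propext (finite_coincidences_shiftPath_iff hXa hYa n m)
  exact (hW.measure_eq_zero_or_one_of_isPairShiftInvariant hconn hlf hLiou
    measurableSet_finite_coincidences hinv).resolve_left hpos.ne'
end
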